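/- Let p be an odd prime, α a positive integer, and δ a positive divisor of φ(p^α). Then the sum over all units a of ℤ/p^αℤ whose multiplicative order equals δ is congruent to μ(gcd(δ, p-1)) · φ(p^{v_p(δ)}) modulo p^α, where v_p(δ) is the p-adic valuation of δ (the largest k with p^k dividing δ). -/

import Mathlib

/-!
Möbius inversion of `∑_{d ∣ e} G(d) = S(e)`, where `G(d)` is the sum of the units of order `d`
and `S(e)` the sum of the units with `a ^ e = 1`, reduces the theorem to computing `S(e)` for
`e ∣ φ(p^α) = p^(α-1) (p-1)`.

If a prime `q ∣ p - 1` divides `e`, take a unit `c` of order `q`. As `q` is invertible in the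
local ring `ℤ/p^αℤ`, `c ≢ 1 (mod p)`, so `c - 1` is a unit, and `c S(e) = S(e)` forces `S(e) = 0`.
Otherwise `e = p^γ` with `γ < α`. The `p^γ` elements `1 + p^(α-γ) k`, `k < p^γ`, satisfy
`x ^ p^γ = 1`, and since the unit group is cyclic there are no others; as `p` is odd their sum
is `p^γ`. So `S(e) = e` if `e` is coprime to `p - 1` and `S(e) = 0` otherwise. Writing
`δ = p^β d₀` with `d₀ ∣ p - 1`, the Möbius sum collapses to
`μ(d₀) ∑_{e ∣ p^β} μ(p^β / e) e = μ(d₀) φ(p^β)`.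
-/

open Finset ArithmeticFunction IsLocalRing
open scoped ArithmeticFunction.Moebius Nat

section FiniteMonoid

variable {G A : Type*} [Monoid G] [Fintype G] [DecidableEq G]

theorem sum_divisors_sum_orderOf_eq [AddCommMonoid A] (f : G → A) {m : ℕ} (hm : m ≠ 0) :
    ∑ d ∈ m.divisors, ∑ a ∈ univ.filter (fun a : G => orderOf a = d), f a =
      ∑ a ∈ univ.filter (fun a : G => a ^ m = 1), f a := by
  rw [← sum_fiberwise_of_maps_to (g := orderOf) (t := m.divisors)
    fun a ha => Nat.mem_divisors.mpr ⟨orderOf_dvd_of_pow_eq_one (mem_filter.mp ha).2, hm⟩]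
  refine sum_congr rfl fun d hd => sum_congr ?_ fun _ _ => rfl
  ext a
  simp only [mem_filter, mem_univ, true_and, iff_and_self]
  rintro rfl
  exact orderOf_dvd_iff_pow_eq_one.mp (Nat.dvd_of_mem_divisors hd)

theorem sum_orderOf_eq_sum_moebius_smul [AddCommGroup A] (f : G → A) {n : ℕ} (hn : n ≠ 0) :
    ∑ a ∈ univ.filter (fun a : G => orderOf a = n), f a =
      ∑ e ∈ n.divisors, μ (n / e) • ∑ a ∈ univ.filter (fun a : G => a ^ e = 1), f a := by
  rw [← Nat.sum_divisorsAntidiagonal'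
    (f := fun x y => μ x • ∑ a ∈ univ.filter (fun a : G => a ^ y = 1), f a)]
  exact (sum_eq_iff_sum_smul_moebius_eq.mp
    (fun m hm => sum_divisors_sum_orderOf_eq f hm.ne') n (Nat.pos_of_ne_zero hn)).symm

end FiniteMonoid

theorem sum_divisors_moebius_smul_eq_totient {R : Type*} [AddCommGroupWithOne R] {n : ℕ}
    (hn : n ≠ 0) :
    ∑ e ∈ n.divisors, μ (n / e) • (e : R) = n.totient := by
  rw [← Nat.sum_divisorsAntidiagonal' (f := fun x y => μ x • (y : R))]
  refine (sum_eq_iff_sum_smul_moebius_eq (f := fun m => (m.totient : R))).mp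
    (fun m _ => ?_) n (Nat.pos_of_ne_zero hn)
  rw [← Nat.cast_sum, Nat.sum_totient]

theorem sum_divisors_moebius_mul_div_smul_eq {R : Type*} [AddCommGroupWithOne R] {a b : ℕ}
    (ha : a ≠ 0) (hab : a.Coprime b) :
    ∑ e ∈ a.divisors, μ (a * b / e) • (e : R) = μ b • (a.totient : R) := by
  rw [← sum_divisors_moebius_smul_eq_totient ha, smul_sum]
  refine sum_congr rfl fun e he => ?_
  obtain ⟨k, rfl⟩ := Nat.dvd_of_mem_divisors he
  have he0 : 0 < e := Nat.pos_of_mem_divisors he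
  rw [mul_assoc, Nat.mul_div_cancel_left _ he0, Nat.mul_div_cancel_left _ he0,
    isMultiplicative_moebius.map_mul_of_coprime (Nat.Coprime.coprime_mul_left hab), mul_comm,
    mul_smul]

theorem Nat.filter_coprime_divisors_mul {a b m : ℕ} (ham : a.Coprime m) (hbm : b ∣ m)
    (hb : b ≠ 0) :
    (a * b).divisors.filter (·.Coprime m) = a.divisors := by
  ext e
  simp only [mem_filter, Nat.mem_divisors]
  constructor
  · rintro ⟨⟨he, hab⟩, hem⟩
    exact ⟨(hem.coprime_dvd_right hbm).dvd_of_dvd_mul_right he, left_ne_zero_of_mul hab⟩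
  · rintro ⟨he, ha⟩
    exact ⟨⟨he.mul_right b, mul_ne_zero ha hb⟩, ham.coprime_dvd_left he⟩

theorem IsLocalRing.isUnit_sub_one_of_pow_eq_one {R : Type*} [CommRing R] [IsLocalRing R]
    {c : R} {q : ℕ} (hcq : c ^ q = 1) (hc : c ≠ 1) (hq : IsUnit (q : R)) : IsUnit (c - 1) := by
  by_contra hc1
  have hres : residue R c = 1 := by
    rwa [← sub_eq_zero, ← map_one (residue R), ← map_sub, ← not_ne_iff,
      residue_ne_zero_iff_isUnit]
  have hgeom : IsUnit (∑ k ∈ range q, c ^ k) := by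
    rw [← residue_ne_zero_iff_isUnit, map_sum]
    simpa [hres] using (residue_ne_zero_iff_isUnit _).mpr hq
  apply hc
  rw [← sub_eq_zero, ← hgeom.mul_right_eq_zero, mul_comm, mul_geom_sum, hcq, sub_self]

theorem sum_units_pow_eq_one_eq_zero_of_isUnit_sub_one {R : Type*} [CommRing R] [Fintype Rˣ]
    [DecidableEq Rˣ] {e : ℕ} {c : Rˣ} (hce : c ^ e = 1) (hc : IsUnit ((c : R) - 1)) :
    ∑ a ∈ univ.filter (fun a : Rˣ => a ^ e = 1), (a : R) = 0 := by
  set s := univ.filter (fun a : Rˣ => a ^ e = 1)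
  have hinv : (c : R) * ∑ a ∈ s, (a : R) = ∑ a ∈ s, (a : R) := by
    rw [mul_sum]
    refine sum_nbij' (c * ·) (c⁻¹ * ·) ?_ ?_ (fun _ _ => by simp) (fun _ _ => by simp)
      (fun _ _ => rfl)
    all_goals
      intro a ha
      simp only [s, mem_filter, mem_univ, true_and] at ha ⊢
      simp [mul_pow, hce, ha]
  rw [← hc.mul_right_eq_zero, sub_mul, one_mul, hinv, sub_self]

theorem IsLocalRing.sum_units_pow_eq_one_eq_zero {R : Type*} [CommRing R] [IsLocalRing R]
    [Fintype Rˣ] [DecidableEq Rˣ] {e q : ℕ} (hq : q.Prime) (hqR : q ∣ Fintype.card Rˣ)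
    (hqe : q ∣ e) (hqu : IsUnit (q : R)) :
    ∑ a ∈ univ.filter (fun a : Rˣ => a ^ e = 1), (a : R) = 0 := by
  have := Fact.mk hq
  obtain ⟨c, hc⟩ := exists_prime_orderOf_dvd_card q hqR
  have hc1 : (c : R) ≠ 1 := fun h => hq.ne_one (by rw [← hc, Units.val_eq_one.mp h, orderOf_one])
  refine sum_units_pow_eq_one_eq_zero_of_isUnit_sub_one
    (orderOf_dvd_iff_pow_eq_one.mp (hc ▸ hqe)) (isUnit_sub_one_of_pow_eq_one ?_ hc1 hqu)
  rw [← Units.val_pow_eq_pow_val, ← hc, pow_orderOf_eq_one, Units.val_one]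

theorem sum_units_pow_eq_one_eq_sum_of_isCyclic {R : Type*} [CommRing R] [Fintype Rˣ]
    [DecidableEq Rˣ] [IsCyclic Rˣ] {n : ℕ} (hn : n ≠ 0) {t : Finset R}
    (ht : ∀ x ∈ t, x ^ n = 1) (hcard : n ≤ t.card) :
    ∑ a ∈ univ.filter (fun a : Rˣ => a ^ n = 1), (a : R) = ∑ x ∈ t, x := by
  set s := univ.filter (fun a : Rˣ => a ^ n = 1)
  have hts : t ⊆ s.map ⟨Units.val, Units.val_injective⟩ := fun x hx => by
    have hxu := IsUnit.of_pow_eq_one (ht x hx) hn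
    refine mem_map.mpr ⟨hxu.unit, ?_, hxu.unit_spec⟩
    simpa [s, Units.ext_iff] using ht x hx
  have hst : s.map ⟨Units.val, Units.val_injective⟩ = t :=
    (eq_of_superset_of_card_ge hts
      (by simpa [s] using (IsCyclic.card_pow_eq_one_le (Nat.pos_of_ne_zero hn)).trans hcard))
  rw [← hst, sum_map]
  rfl

theorem pow_prime_pow_one_add_mul_eq_one {R : Type*} [CommRing R] {p j β : ℕ} (hp : p.Prime)
    (hj : j ≠ 0) (hR : (p : R) ^ (j + β) = 0) (x : R) :
    (1 + (p : R) ^ j * x) ^ p ^ β = 1 := by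
  have hdvd : (p : R) * (p : R) ^ j * 1 ∣ ((p : R) ^ j) ^ p := by
    rw [mul_one, ← pow_succ', ← pow_mul]
    exact pow_dvd_pow _ (by nlinarith [hp.two_le, Nat.pos_of_ne_zero hj])
  obtain ⟨y, hy⟩ := ZMod.exists_one_add_mul_pow_prime_pow_eq hp (one_dvd _) hdvd x β
  rw [hy, ← pow_add, add_comm β, hR, zero_mul, add_zero]

theorem ZMod.sum_range_one_add_mul {n M N : ℕ} (hMN : M * N = n) (hN : Odd N) :
    ∑ k ∈ range N, (1 + M * k : ZMod n) = N := by
  subst hMN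
  obtain ⟨w, hw⟩ := hN
  have hsum : ∑ k ∈ range N, k = N * w := by
    have := sum_range_id_mul_two N
    rw [hw] at this ⊢
    simp only [add_tsub_cancel_right] at this
    linarith
  rw [sum_add_distrib, ← mul_sum, ← Nat.cast_sum, hsum, sum_const, card_range, nsmul_one,
    Nat.cast_mul, ← mul_assoc, ← Nat.cast_mul, ZMod.natCast_self, zero_mul, add_zero]

theorem ZMod.injOn_one_add_mul {n M N : ℕ} (hMN : M * N = n) (hM : M ≠ 0) :
    Set.InjOn (fun k : ℕ => (1 + M * k : ZMod n)) (range N) := by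
  subst hMN
  intro k hk k' hk' h
  simp only [add_right_inj, ← Nat.cast_mul, ZMod.natCast_eq_natCast_iff] at h
  exact (Nat.ModEq.mul_left_cancel' hM h).eq_of_lt_of_lt (mem_range.mp hk) (mem_range.mp hk')

namespace ZMod

variable {p α : ℕ}

theorem isLocalRing_prime_pow (hp : p.Prime) (hα : α ≠ 0) : IsLocalRing (ZMod (p ^ α)) :=
  have := Fact.mk hp
  have := ZMod.nontrivial_iff.mpr (Nat.one_lt_pow hα hp.one_lt).ne'
  IsLocalRing.of_surjective' (PadicInt.toZModPow α) (ZMod.ringHom_surjective _)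

theorem sum_units_pow_eq_one_eq_zero_of_prime_dvd_sub_one [NeZero (p ^ α)] (hp : p.Prime)
    (hα : α ≠ 0) {e q : ℕ} (hq : q.Prime) (hqe : q ∣ e) (hqp : q ∣ p - 1) :
    ∑ a ∈ univ.filter (fun a : (ZMod (p ^ α))ˣ => a ^ e = 1), (a : ZMod (p ^ α)) = 0 := by
  have := isLocalRing_prime_pow hp hα
  refine IsLocalRing.sum_units_pow_eq_one_eq_zero hq ?_ hqe ?_
  · rw [card_units_eq_totient, Nat.totient_prime_pow hp (Nat.pos_of_ne_zero hα)]
    exact hqp.trans (dvd_mul_left _ _)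
  · have hqp_lt : q < p :=
      (Nat.le_of_dvd (Nat.sub_pos_of_lt hp.one_lt) hqp).trans_lt (Nat.sub_lt hp.pos one_pos)
    rw [isUnit_prime_iff_not_dvd hq]
    exact fun h => hqp_lt.ne ((Nat.prime_dvd_prime_iff_eq hq hp).mp (hq.dvd_of_dvd_pow h))

theorem sum_units_pow_prime_pow_eq [NeZero (p ^ α)] (hp : p.Prime) (hodd : p ≠ 2) {β : ℕ}
    (hβ : β < α) :
    ∑ a ∈ univ.filter (fun a : (ZMod (p ^ α))ˣ => a ^ p ^ β = 1), (a : ZMod (p ^ α)) =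
      ((p ^ β : ℕ) : ZMod (p ^ α)) := by
  have := isCyclic_units_of_prime_pow p hp hodd α
  have hMN : p ^ (α - β) * p ^ β = p ^ α := by rw [← pow_add, Nat.sub_add_cancel hβ.le]
  have hinj := injOn_one_add_mul hMN (pow_ne_zero (α - β) hp.ne_zero)
  rw [sum_units_pow_eq_one_eq_sum_of_isCyclic (pow_ne_zero β hp.ne_zero)
      (t := (range (p ^ β)).image fun k : ℕ => (1 + (p ^ (α - β) : ℕ) * k : ZMod (p ^ α))),
    sum_image hinj, sum_range_one_add_mul hMN (hp.odd_of_ne_two hodd).pow]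
  · intro x hx
    obtain ⟨k, -, rfl⟩ := mem_image.mp hx
    push_cast
    refine pow_prime_pow_one_add_mul_eq_one hp (by omega) ?_ _
    rw [Nat.sub_add_cancel hβ.le, ← Nat.cast_pow, natCast_self]
  · rw [card_image_of_injOn hinj, card_range]

theorem sum_units_pow_eq_one_of_dvd_totient [NeZero (p ^ α)] (hp : p.Prime) (hodd : p ≠ 2)
    (hα : α ≠ 0) {e : ℕ} (he : e ∣ φ (p ^ α)) :
    ∑ a ∈ univ.filter (fun a : (ZMod (p ^ α))ˣ => a ^ e = 1), (a : ZMod (p ^ α)) =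
      if e.Coprime (p - 1) then (e : ZMod (p ^ α)) else 0 := by
  rw [Nat.totient_prime_pow hp (Nat.pos_of_ne_zero hα)] at he
  split_ifs with hcop
  · obtain ⟨γ, hγ, rfl⟩ := (Nat.dvd_prime_pow hp).mp (hcop.dvd_of_dvd_mul_right he)
    exact sum_units_pow_prime_pow_eq hp hodd (show γ < α by omega)
  · obtain ⟨q, hq, hqe, hqp⟩ := Nat.Prime.not_coprime_iff_dvd.mp hcop
    exact sum_units_pow_eq_one_eq_zero_of_prime_dvd_sub_one hp hα hq hqe hqp

end ZMod

theorem Nat.ordCompl_dvd_sub_one_of_dvd_totient {p α δ : ℕ} (hp : p.Prime)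
    (hδ : δ ∣ φ (p ^ α)) : ordCompl[p] δ ∣ p - 1 := by
  have hδ0 : δ ≠ 0 := ne_zero_of_dvd_ne_zero (Nat.totient_pos.mpr (pow_pos hp.pos α)).ne' hδ
  rcases Nat.eq_zero_or_pos α with rfl | hα
  · rw [pow_zero, Nat.totient_one, Nat.dvd_one] at hδ
    simp [hδ]
  rw [Nat.totient_prime_pow hp hα] at hδ
  exact ((Nat.coprime_ordCompl hp hδ0).symm.pow_right _).dvd_of_dvd_mul_left
    ((Nat.ordCompl_dvd δ p).trans hδ)

open Finset in
open scoped Classical in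
theorem sum_units_orderOf_prime_pow_general (p α δ : ℕ) (hp : p.Prime) (hodd : p ≠ 2) (hα : 0 < α)
    (hδ : δ ∣ Nat.totient (p ^ α)) :
    haveI : NeZero (p ^ α) := ⟨pow_ne_zero α hp.pos.ne'⟩
    ∑ a ∈ univ.filter (fun a : (ZMod (p ^ α))ˣ => orderOf a = δ), (a : ZMod (p ^ α)) =
      ((ArithmeticFunction.moebius (Nat.gcd δ (p - 1)) : ℤ) : ZMod (p ^ α)) *
        ((Nat.totient (p ^ (δ.factorization p)) : ℕ) : ZMod (p ^ α)) := by
  have : NeZero (p ^ α) := ⟨pow_ne_zero α hp.ne_zero⟩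
  have hδ0 : δ ≠ 0 := ne_zero_of_dvd_ne_zero (Nat.totient_pos.mpr (pow_pos hp.pos α)).ne' hδ
  set β := δ.factorization p
  set d₀ := ordCompl[p] δ
  have hd₀ : d₀ ∣ p - 1 := Nat.ordCompl_dvd_sub_one_of_dvd_totient hp hδ
  have hpβ : (p ^ β).Coprime (p - 1) :=
    ((Nat.coprime_self_sub_right hp.one_le).mpr (Nat.coprime_one_right p)).pow_left β
  have hδ_eq : p ^ β * d₀ = δ := Nat.ordProj_mul_ordCompl_eq_self δ p
  calc ∑ a ∈ univ.filter (fun a : (ZMod (p ^ α))ˣ => orderOf a = δ), (a : ZMod (p ^ α))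
      = ∑ e ∈ δ.divisors,
          μ (δ / e) • (if e.Coprime (p - 1) then (e : ZMod (p ^ α)) else 0) := by
        rw [sum_orderOf_eq_sum_moebius_smul _ hδ0]
        refine sum_congr rfl fun e he => ?_
        rw [ZMod.sum_units_pow_eq_one_of_dvd_totient hp hodd hα.ne'
          ((Nat.dvd_of_mem_divisors he).trans hδ)]
    _ = ∑ e ∈ (p ^ β * d₀).divisors.filter (·.Coprime (p - 1)),
          μ (p ^ β * d₀ / e) • (e : ZMod (p ^ α)) := by
        simp only [smul_ite, smul_zero, ← sum_filter, hδ_eq]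
    _ = μ d₀ • (φ (p ^ β) : ZMod (p ^ α)) := by
        rw [Nat.filter_coprime_divisors_mul hpβ hd₀ (Nat.ordCompl_pos p hδ0).ne',
          sum_divisors_moebius_mul_div_smul_eq (pow_ne_zero β hp.ne_zero)
            ((Nat.coprime_ordCompl hp hδ0).pow_left β)]
    _ = _ := by
        rw [← hδ_eq, Nat.Coprime.gcd_mul_left_cancel d₀ hpβ, Nat.gcd_eq_left hd₀, zsmul_eq_mul]

open Finset in
open scoped Classical in
/-- For an odd prime `p`, `α ≥ 1` and `δ` a positive divisor of `φ(p^α)`, the sum of all units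
of `ℤ/p^αℤ` of multiplicative order `δ` is `μ(gcd(δ, p-1)) · φ(p^(v_p δ))` in `ZMod (p^α)`. -/
theorem sum_units_orderOf_prime_pow (p α δ : ℕ) (hp : p.Prime) (hodd : p ≠ 2) (hα : 0 < α)
    (hδpos : 0 < δ) (hδ : δ ∣ Nat.totient (p ^ α)) :
    haveI : NeZero (p ^ α) := ⟨pow_ne_zero α hp.pos.ne'⟩
    ∑ a ∈ univ.filter (fun a : (ZMod (p ^ α))ˣ => orderOf a = δ), (a : ZMod (p ^ α)) =
      ((ArithmeticFunction.moebius (Nat.gcd δ (p - 1)) : ℤ) : ZMod (p ^ α)) *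
        ((Nat.totient (p ^ (δ.factorization p)) : ℕ) : ZMod (p ^ α)) :=
  sum_units_orderOf_prime_pow_general p α δ hp hodd hα hδ
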